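/- Let d ≥ 1. (i) For every integer j ≥ 1 and every s ≥ 0, ∫_{ℝ^d} G_{2j}(y)·|y|^s dy = (2^s Γ((d+s)/2)/Γ(d/2)) · (Γ(j + s/2)/Γ(j)). (ii) For 0 < α ≤ 1 and 0 ≤ s < α, the integral ∫_{ℝ^d} A_{α,1}(y)·|y|^s dy = ∑_{j=1}^∞ a_{α,j} ∫_{ℝ^d} G_{2j}(y)|y|^s dy is finite. -/

import Mathlib

open MeasureTheory Real
open scoped ENNReal

noncomputable section

/-- The coefficients `a_{α,j} = |binom(α/2, j)| = (α/2)·∏_{k=1}^{j−1}(k − α/2)/j!`. -/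
def aCoeff (α : ℝ) (j : ℕ) : ℝ :=
  (α / 2) * (∏ k ∈ Finset.Icc 1 (j - 1), ((k : ℝ) - α / 2)) / (Nat.factorial j)

/-- The Bessel kernel `G_s` on `ℝ^d`. -/
def besselKernel (d : ℕ) (s : ℝ) (x : EuclideanSpace ℝ (Fin d)) : ℝ :=
  (1 / Real.Gamma (s / 2)) *
    ∫ t in Set.Ioi (0 : ℝ),
      (4 * π * t) ^ (-(d : ℝ) / 2) * Real.exp (-‖x‖ ^ 2 / (4 * t)) * Real.exp (-t) *
        t ^ (s / 2 - 1)

/-- The kernel `A_{α,μ}(z) = μ^d ∑_{j≥1} a_{α,j} G_{2j}(μ z)`. -/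
def AKernel (d : ℕ) (α μ : ℝ) (z : EuclideanSpace ℝ (Fin d)) : ℝ :=
  μ ^ d * ∑' j : ℕ, aCoeff α (j + 1) * besselKernel d (2 * (j + 1)) (μ • z)

/-- The Bessel–Riesz quotient operator `E_{α,μ} f = f − A_{α,μ} ⋆ f`. -/
def Eop (d : ℕ) (α μ : ℝ) (f : EuclideanSpace ℝ (Fin d) → ℝ)
    (x : EuclideanSpace ℝ (Fin d)) : ℝ :=
  f x - ∫ y, AKernel d α μ (x - y) * f y

/-- The `L^p` modulus of continuity `ω(f,t)_p = sup_{|h| ≤ t} ‖f(·+h) − f‖_p`. -/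
def modCont (d : ℕ) (p : ℝ≥0∞) (f : EuclideanSpace ℝ (Fin d) → ℝ) (t : ℝ) : ℝ≥0∞ :=
  ⨆ h ∈ {h : EuclideanSpace ℝ (Fin d) | ‖h‖ ≤ t},
    eLpNorm (fun x => f (x + h) - f x) p volume

/-!
By subordination, `G_{2c} = Γ(c)⁻¹ ∫₀^∞ W_t e^{-t} t^{c-1} dt` with `W_t` the heat kernel. Polar
coordinates give `∫ W_t(y) |y|^s dy = 2^s t^{s/2} Γ((d+s)/2) / Γ(d/2)`, so by Fubini the `s`-th
moment of `G_{2c}` reduces to Euler's integral for `Γ(c + s/2)`.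

For `A_{α,1}`, the bounds `1 - x ≤ e^{-x}` and `log (n+1) ≤ H_n` give
`a_{α,j+1} ≤ (α/2) (j+1)^{-1-α/2}`, and log-convexity of `Γ` gives
`Γ(j+1+s/2) / Γ(j+1) ≤ (j+1)^{s/2}`. Hence the moments of the terms of `A_{α,1}` are dominated by
`(j+1)^{-1-(α-s)/2}`, which is summable for `s < α`, and the series can be integrated termwise.
-/

open Module Set
open scoped Nat

theorem MeasureTheory.integrable_tsum_of_summable_integral_norm {α : Type*} [MeasurableSpace α]
    {μ : Measure α} {ι : Type*} [Countable ι] {F : ι → α → ℝ} (hF_int : ∀ i, Integrable (F i) μ)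
    (hF_sum : Summable fun i => ∫ a, ‖F i a‖ ∂μ) : Integrable (fun a => ∑' i, F i a) μ := by
  refine ⟨(AEMeasurable.tsum fun i => (hF_int i).aemeasurable).aestronglyMeasurable, ?_⟩
  calc ∫⁻ a, ‖∑' i, F i a‖ₑ ∂μ ≤ ∫⁻ a, ∑' i, ‖F i a‖ₑ ∂μ :=
        lintegral_mono fun a => enorm_tsum_le_tsum_enorm
    _ = ∑' i, ENNReal.ofReal (∫ a, ‖F i a‖ ∂μ) := by
        rw [lintegral_tsum fun i => (hF_int i).aemeasurable.enorm]
        simp_rw [ofReal_integral_norm_eq_lintegral_enorm (hF_int _)]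
    _ < ⊤ := by
        rw [← ENNReal.ofReal_tsum_of_nonneg (fun i => integral_nonneg fun a => norm_nonneg _)
          hF_sum]
        exact ENNReal.ofReal_lt_top

theorem Real.Gamma_add_le_Gamma_mul_rpow {x h : ℝ} (hx : 0 < x) (h0 : 0 ≤ h) (h1 : h ≤ 1) :
    Gamma (x + h) ≤ Gamma x * x ^ h := by
  have hconv := convexOn_log_Gamma.2 (mem_Ioi.2 hx) (mem_Ioi.2 (by linarith : 0 < x + 1))
    (sub_nonneg.2 h1) h0 (sub_add_cancel 1 h)
  simp only [smul_eq_mul, Function.comp_apply, Gamma_add_one hx.ne',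
    log_mul hx.ne' (Gamma_pos_of_pos hx).ne'] at hconv
  rw [show (1 - h) * x + h * (x + 1) = x + h by ring] at hconv
  rw [← log_le_log_iff (Gamma_pos_of_pos (by linarith)) (by positivity),
    log_mul (Gamma_pos_of_pos hx).ne' (by positivity), log_rpow hx]
  linarith

lemma prod_Icc_natCast_sub_le {x : ℝ} (hx0 : 0 ≤ x) (hx1 : x ≤ 1) (n : ℕ) :
    ∏ k ∈ Finset.Icc 1 n, ((k : ℝ) - x) ≤ n ! * ((n : ℝ) + 1) ^ (-x) := by
  have hfactor : ∀ k ∈ Finset.Icc 1 n, (k : ℝ) - x ≤ k * exp (-(x * (k : ℝ)⁻¹)) := by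
    intro k hk
    have hk : (1 : ℝ) ≤ k := by exact_mod_cast (Finset.mem_Icc.1 hk).1
    calc (k : ℝ) - x = k * (-(x * (k : ℝ)⁻¹) + 1) := by field_simp; ring
      _ ≤ k * exp (-(x * (k : ℝ)⁻¹)) := by gcongr; exact add_one_le_exp _
  have hfact : ∏ k ∈ Finset.Icc 1 n, (k : ℝ) = n ! := by
    rw [← Finset.Ico_add_one_right_eq_Icc, ← Finset.prod_Ico_id_eq_factorial, Nat.cast_prod]
  calc ∏ k ∈ Finset.Icc 1 n, ((k : ℝ) - x)
      ≤ ∏ k ∈ Finset.Icc 1 n, ((k : ℝ) * exp (-(x * (k : ℝ)⁻¹))) := by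
        refine Finset.prod_le_prod (fun k hk => ?_) hfactor
        have hk : (1 : ℝ) ≤ k := by exact_mod_cast (Finset.mem_Icc.1 hk).1
        linarith
    _ = n ! * exp (-(x * harmonic n)) := by
        rw [Finset.prod_mul_distrib, hfact, ← exp_sum, harmonic_eq_sum_Icc, Rat.cast_sum,
          Finset.mul_sum, ← Finset.sum_neg_distrib]
        simp only [Rat.cast_inv, Rat.cast_natCast]
    _ ≤ n ! * ((n : ℝ) + 1) ^ (-x) := by
        have hH : log ((n : ℝ) + 1) ≤ harmonic n := by simpa using log_add_one_le_harmonic n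
        rw [rpow_def_of_pos (by positivity)]
        gcongr
        nlinarith

lemma eqOn_pow_pred_smul_exp_neg_mul_sq_mul_rpow {n : ℕ} (hn : 0 < n) (b s : ℝ) :
    EqOn (fun r : ℝ => r ^ (n - 1) • (exp (-b * r ^ 2) * r ^ s))
      (fun r => r ^ ((n : ℝ) - 1 + s) * exp (-b * r ^ (2 : ℝ))) (Ioi 0) := by
  intro r (hr : 0 < r)
  dsimp only
  rw [smul_eq_mul, rpow_add hr, rpow_sub_one hr.ne', rpow_natCast, rpow_two,
    pow_sub₀ _ hr.ne' hn, pow_one]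
  ring

section GaussianMoments

variable {E : Type*} [NormedAddCommGroup E] [InnerProductSpace ℝ E]

def heatKernel (t : ℝ) (y : E) : ℝ :=
  (4 * π * t) ^ (-(finrank ℝ E : ℝ) / 2) * exp (-‖y‖ ^ 2 / (4 * t))

lemma heatKernel_mul_norm_rpow (t : ℝ) (y : E) (s : ℝ) :
    heatKernel t y * ‖y‖ ^ s =
      (4 * π * t) ^ (-(finrank ℝ E : ℝ) / 2) * (exp (-(4 * t)⁻¹ * ‖y‖ ^ 2) * ‖y‖ ^ s) := by
  rw [heatKernel, mul_assoc, neg_mul, inv_mul_eq_div, ← neg_div]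

variable [FiniteDimensional ℝ E] [MeasurableSpace E] [BorelSpace E] [Nontrivial E]

theorem integrable_exp_neg_mul_sq_norm_mul_rpow {b s : ℝ} (hb : 0 < b)
    (hs : -(finrank ℝ E : ℝ) < s) :
    Integrable (fun y : E => exp (-b * ‖y‖ ^ 2) * ‖y‖ ^ s) := by
  rw [integrable_fun_norm_addHaar volume (f := fun r => exp (-b * r ^ 2) * r ^ s),
    integrableOn_congr_fun (eqOn_pow_pred_smul_exp_neg_mul_sq_mul_rpow finrank_pos b s)
      measurableSet_Ioi]
  exact integrableOn_rpow_mul_exp_neg_mul_rpow (by linarith) two_pos hb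

theorem integral_exp_neg_mul_sq_norm_mul_rpow {b s : ℝ} (hb : 0 < b)
    (hs : -(finrank ℝ E : ℝ) < s) :
    ∫ y : E, exp (-b * ‖y‖ ^ 2) * ‖y‖ ^ s =
      π ^ ((finrank ℝ E : ℝ) / 2) * b ^ (-((finrank ℝ E + s) / 2)) *
        (Gamma ((finrank ℝ E + s) / 2) / Gamma (finrank ℝ E / 2)) := by
  have hd : (0 : ℝ) < finrank ℝ E := Nat.cast_pos.mpr finrank_pos
  have hsqrt : √π ^ finrank ℝ E = π ^ ((finrank ℝ E : ℝ) / 2) := by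
    rw [sqrt_eq_rpow, ← rpow_natCast, ← rpow_mul pi_pos.le, one_div_mul_eq_div]
  rw [integral_fun_norm_addHaar volume (fun r => exp (-b * r ^ 2) * r ^ s),
    setIntegral_congr_fun measurableSet_Ioi
      (eqOn_pow_pred_smul_exp_neg_mul_sq_mul_rpow finrank_pos b s),
    integral_rpow_mul_exp_neg_mul_rpow two_pos (by linarith) hb, measureReal_def,
    InnerProductSpace.volume_ball, ENNReal.ofReal_one, one_pow, one_mul,
    ENNReal.toReal_ofReal (by positivity), nsmul_eq_mul, smul_eq_mul,
    Gamma_add_one (by positivity), show (finrank ℝ E : ℝ) - 1 + s + 1 = finrank ℝ E + s by ring,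
    neg_div, hsqrt]
  field_simp

theorem integrable_heatKernel_mul_norm_rpow {t s : ℝ} (ht : 0 < t)
    (hs : -(finrank ℝ E : ℝ) < s) : Integrable (fun y : E => heatKernel t y * ‖y‖ ^ s) := by
  simp_rw [heatKernel_mul_norm_rpow]
  exact (integrable_exp_neg_mul_sq_norm_mul_rpow (by positivity) hs).const_mul _

theorem integral_heatKernel_mul_norm_rpow {t s : ℝ} (ht : 0 < t)
    (hs : -(finrank ℝ E : ℝ) < s) :
    ∫ y : E, heatKernel t y * ‖y‖ ^ s =
      2 ^ s * t ^ (s / 2) * (Gamma ((finrank ℝ E + s) / 2) / Gamma (finrank ℝ E / 2)) := by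
  simp_rw [heatKernel_mul_norm_rpow]
  rw [integral_const_mul, integral_exp_neg_mul_sq_norm_mul_rpow (by positivity) hs, ← mul_assoc,
    ← mul_assoc]
  congr 1
  have hlog4 : log 4 = 2 * log 2 := by
    rw [show (4 : ℝ) = 2 ^ 2 by norm_num, log_pow, Nat.cast_ofNat]
  rw [rpow_def_of_pos (by positivity), log_mul (by positivity) ht.ne',
    log_mul four_ne_zero pi_ne_zero]
  simp only [rpow_def_of_pos, pi_pos, ht, two_pos, inv_pos, mul_pos, four_pos, ← exp_add,
    log_inv, log_mul, ht.ne', four_ne_zero, ne_eq, not_false_eq_true, hlog4]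
  ring_nf

end GaussianMoments

section BesselKernel

variable {d : ℕ}

lemma besselKernel_two_mul_mul_norm_rpow (c s : ℝ) (y : EuclideanSpace ℝ (Fin d)) :
    besselKernel d (2 * c) y * ‖y‖ ^ s =
      (Gamma c)⁻¹ * ∫ t in Ioi 0, exp (-t) * t ^ (c - 1) * (heatKernel t y * ‖y‖ ^ s) := by
  rw [besselKernel, mul_div_cancel_left₀ c two_ne_zero, one_div, mul_assoc,
    ← integral_mul_const]
  congr 2 with t
  rw [heatKernel, finrank_euclideanSpace_fin]
  ring

lemma besselKernel_nonneg {σ : ℝ} (hσ : 0 < σ) (x : EuclideanSpace ℝ (Fin d)) :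
    0 ≤ besselKernel d σ x := by
  have := Gamma_pos_of_pos (half_pos hσ)
  refine mul_nonneg (by positivity) (setIntegral_nonneg measurableSet_Ioi fun t ht => ?_)
  have : 0 < t := ht
  positivity

variable [NeZero d] {c s : ℝ}

lemma integral_exp_neg_mul_rpow_mul_heatKernel_mul_norm_rpow {t : ℝ} (ht : 0 < t)
    (hs : -(d : ℝ) < s) :
    ∫ y : EuclideanSpace ℝ (Fin d), exp (-t) * t ^ (c - 1) * (heatKernel t y * ‖y‖ ^ s) =
      2 ^ s * (Gamma ((d + s) / 2) / Gamma (d / 2)) * (exp (-t) * t ^ (c + s / 2 - 1)) := by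
  rw [integral_const_mul,
    integral_heatKernel_mul_norm_rpow (E := EuclideanSpace ℝ (Fin d)) ht (by simpa using hs),
    finrank_euclideanSpace_fin, add_sub_right_comm, rpow_add ht]
  ring

lemma integrable_exp_neg_mul_rpow_mul_heatKernel_mul_norm_rpow (hs : -(d : ℝ) < s)
    (hcs : 0 < c + s / 2) :
    Integrable (Function.uncurry fun t (y : EuclideanSpace ℝ (Fin d)) =>
      exp (-t) * t ^ (c - 1) * (heatKernel t y * ‖y‖ ^ s))
      ((volume.restrict (Ioi 0)).prod volume) := by
  rw [integrable_prod_iff (by unfold heatKernel; fun_prop)]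
  constructor
  · filter_upwards [ae_restrict_mem measurableSet_Ioi] with t (ht : 0 < t)
    exact (integrable_heatKernel_mul_norm_rpow (E := EuclideanSpace ℝ (Fin d)) ht
      (by simpa using hs)).const_mul (exp (-t) * t ^ (c - 1))
  · refine ((GammaIntegral_convergent hcs).const_mul
      (2 ^ s * (Gamma ((d + s) / 2) / Gamma (d / 2)))).congr ?_
    filter_upwards [ae_restrict_mem measurableSet_Ioi] with t (ht : 0 < t)
    rw [← integral_exp_neg_mul_rpow_mul_heatKernel_mul_norm_rpow ht hs]
    refine integral_congr_ae (.of_forall fun y => (norm_of_nonneg ?_).symm)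
    unfold heatKernel
    positivity

theorem integrable_besselKernel_mul_norm_rpow (hs : -(d : ℝ) < s) (hcs : 0 < c + s / 2) :
    Integrable (fun y : EuclideanSpace ℝ (Fin d) => besselKernel d (2 * c) y * ‖y‖ ^ s) := by
  simp_rw [besselKernel_two_mul_mul_norm_rpow]
  exact (integrable_exp_neg_mul_rpow_mul_heatKernel_mul_norm_rpow hs hcs).integral_prod_right
    |>.const_mul _

theorem integral_besselKernel_mul_norm_rpow (hs : -(d : ℝ) < s) (hcs : 0 < c + s / 2) :
    ∫ y : EuclideanSpace ℝ (Fin d), besselKernel d (2 * c) y * ‖y‖ ^ s =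
      2 ^ s * Gamma ((d + s) / 2) / Gamma (d / 2) * (Gamma (c + s / 2) / Gamma c) := by
  simp_rw [besselKernel_two_mul_mul_norm_rpow]
  rw [integral_const_mul, ← integral_integral_swap
      (integrable_exp_neg_mul_rpow_mul_heatKernel_mul_norm_rpow hs hcs),
    setIntegral_congr_fun measurableSet_Ioi
      fun t ht => integral_exp_neg_mul_rpow_mul_heatKernel_mul_norm_rpow ht hs,
    integral_const_mul, ← Gamma_eq_integral hcs]
  ring

end BesselKernel

section Coefficients

variable {α : ℝ}

lemma aCoeff_nonneg (hα0 : 0 ≤ α) (hα2 : α ≤ 2) (n : ℕ) : 0 ≤ aCoeff α n := by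
  refine div_nonneg (mul_nonneg (by linarith) (Finset.prod_nonneg fun k hk => ?_))
    n !.cast_nonneg
  have hk : (1 : ℝ) ≤ k := by exact_mod_cast (Finset.mem_Icc.1 hk).1
  linarith

lemma aCoeff_succ_le (hα0 : 0 ≤ α) (hα2 : α ≤ 2) (j : ℕ) :
    aCoeff α (j + 1) ≤ α / 2 * ((j : ℝ) + 1) ^ (-(1 + α / 2)) := by
  have hj : (0 : ℝ) < j + 1 := by positivity
  rw [aCoeff, Nat.add_sub_cancel, Nat.factorial_succ, Nat.cast_mul, Nat.cast_succ,
    neg_add, rpow_add hj, rpow_neg_one, mul_div_assoc]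
  gcongr
  rw [div_le_iff₀ (by positivity)]
  calc ∏ k ∈ Finset.Icc 1 j, ((k : ℝ) - α / 2) ≤ j ! * ((j : ℝ) + 1) ^ (-(α / 2)) :=
        prod_Icc_natCast_sub_le (by linarith) (by linarith) j
    _ = _ := by field_simp

theorem summable_aCoeff_mul_Gamma_div {s : ℝ} (hα2 : α ≤ 2) (hs0 : 0 ≤ s) (hsα : s < α) :
    Summable fun j : ℕ =>
      aCoeff α (j + 1) * (Gamma ((j : ℝ) + 1 + s / 2) / Gamma ((j : ℝ) + 1)) := by
  have hα0 : 0 ≤ α := by linarith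
  have hsum : Summable fun j : ℕ => α / 2 * ((j : ℝ) + 1) ^ (-(1 + α / 2) + s / 2) := by
    refine Summable.mul_left _ ?_
    exact_mod_cast (summable_nat_add_iff 1).2 (Real.summable_nat_rpow.2 (by linarith))
  refine hsum.of_nonneg_of_le (fun j => ?_) (fun j => ?_)
  · have := Gamma_pos_of_pos (by positivity : (0 : ℝ) < j + 1 + s / 2)
    have := Gamma_pos_of_pos (by positivity : (0 : ℝ) < j + 1)
    exact mul_nonneg (aCoeff_nonneg hα0 hα2 _) (by positivity)
  · have hj : (0 : ℝ) < j + 1 := by positivity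
    rw [rpow_add hj, ← mul_assoc]
    gcongr ?_ * ?_
    · exact aCoeff_succ_le hα0 hα2 j
    · rw [div_le_iff₀ (Gamma_pos_of_pos hj), mul_comm]
      exact Gamma_add_le_Gamma_mul_rpow hj (by positivity) (by linarith)

end Coefficients

theorem summable_aCoeff_mul_integral_besselKernel_mul_norm_rpow {d : ℕ} [NeZero d] {α s : ℝ}
    (hα2 : α ≤ 2) (hs0 : 0 ≤ s) (hsα : s < α) :
    Summable fun j : ℕ => aCoeff α (j + 1) *
      ∫ y : EuclideanSpace ℝ (Fin d), besselKernel d (2 * (j + 1)) y * ‖y‖ ^ s := by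
  have hds : -(d : ℝ) < s := by
    have : (0 : ℝ) < d := Nat.cast_pos.2 (Nat.pos_of_neZero d)
    linarith
  refine ((summable_aCoeff_mul_Gamma_div hα2 hs0 hsα).mul_left
    (2 ^ s * Gamma ((d + s) / 2) / Gamma (d / 2))).congr fun j => ?_
  rw [integral_besselKernel_mul_norm_rpow hds (by positivity)]
  ring

lemma AKernel_one_mul_norm_rpow {d : ℕ} (α s : ℝ) (y : EuclideanSpace ℝ (Fin d)) :
    AKernel d α 1 y * ‖y‖ ^ s =
      ∑' j : ℕ, aCoeff α (j + 1) * (besselKernel d (2 * (j + 1)) y * ‖y‖ ^ s) := by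
  simp only [AKernel, one_pow, one_mul, one_smul, ← tsum_mul_right, mul_assoc]

/-- (i) The moment formula
`∫ G_{2j}(y)|y|^s dy = (2^s Γ((d+s)/2)/Γ(d/2))·(Γ(j+s/2)/Γ(j))` for `j ≥ 1`, `s ≥ 0`;
(ii) for `0 < α ≤ 1` and `0 ≤ s < α` the integral `∫ A_{α,1}(y)|y|^s dy`, which equals
`∑_{j≥1} a_{α,j} ∫ G_{2j}(y)|y|^s dy`, is finite. -/
theorem bessel_kernel_moments (d : ℕ) (hd : 1 ≤ d) :
    (∀ j : ℕ, 1 ≤ j → ∀ s : ℝ, 0 ≤ s →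
      ∫ y : EuclideanSpace ℝ (Fin d), besselKernel d (2 * j) y * ‖y‖ ^ s =
        (2 ^ s * Real.Gamma (((d : ℝ) + s) / 2) / Real.Gamma ((d : ℝ) / 2)) *
          (Real.Gamma ((j : ℝ) + s / 2) / Real.Gamma (j : ℝ))) ∧
    (∀ α : ℝ, 0 < α → α ≤ 1 → ∀ s : ℝ, 0 ≤ s → s < α →
      Integrable (fun y : EuclideanSpace ℝ (Fin d) => AKernel d α 1 y * ‖y‖ ^ s) volume ∧
      ∫ y : EuclideanSpace ℝ (Fin d), AKernel d α 1 y * ‖y‖ ^ s =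
        ∑' j : ℕ, aCoeff α (j + 1) *
          ∫ y : EuclideanSpace ℝ (Fin d), besselKernel d (2 * (j + 1)) y * ‖y‖ ^ s) := by
  have : NeZero d := ⟨by omega⟩
  have hds (s : ℝ) (hs : 0 ≤ s) : -(d : ℝ) < s := by
    have : (1 : ℝ) ≤ d := by exact_mod_cast hd
    linarith
  constructor
  · intro j hj s hs
    have : (1 : ℝ) ≤ j := by exact_mod_cast hj
    exact integral_besselKernel_mul_norm_rpow (hds s hs) (by linarith)
  · intro α hα0 hα1 s hs0 hsα
    set F : ℕ → EuclideanSpace ℝ (Fin d) → ℝ :=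
      fun j y => aCoeff α (j + 1) * (besselKernel d (2 * (j + 1)) y * ‖y‖ ^ s)
    have hF_int (j : ℕ) : Integrable (F j) :=
      (integrable_besselKernel_mul_norm_rpow (hds s hs0) (by positivity)).const_mul _
    have hF_nonneg (j : ℕ) (y : EuclideanSpace ℝ (Fin d)) : 0 ≤ F j y :=
      mul_nonneg (aCoeff_nonneg hα0.le (by linarith) _)
        (mul_nonneg (besselKernel_nonneg (by positivity) y) (by positivity))
    have hF_sum : Summable fun j => ∫ y, ‖F j y‖ := by
      refine (summable_aCoeff_mul_integral_besselKernel_mul_norm_rpow (d := d) (by linarith) hs0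
        hsα).congr fun j => ?_
      rw [integral_congr_ae (.of_forall fun y => norm_of_nonneg (hF_nonneg j y)),
        integral_const_mul]
    simp_rw [AKernel_one_mul_norm_rpow, ← integral_const_mul]
    exact ⟨integrable_tsum_of_summable_integral_norm hF_int hF_sum,
      (integral_tsum_of_summable_integral_norm hF_int hF_sum).symm⟩

end
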